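/- Let 𝔤 be the 4-dimensional real Lie algebra su(2) ⊕ ℝ = A_{3,9} ⊕ A_1, i.e., the Lie algebra with basis e₁, e₂, e₃, e₄ whose only nonzero brackets among basis vectors (up to antisymmetry) are [e₁,e₂] = e₃, [e₃,e₁] = e₂, [e₂,e₃] = e₁. Then there exist inner products Q₊, Q₀, Q₋ on 𝔤 such that the scalar curvature S = trace(Ric) of (𝔤, Q₊) is positive, that of (𝔤, Q₀) is zero, and that of (𝔤, Q₋) is negative. -/

import Mathlib

open Matrix Polynomial

noncomputable section

variable {L : Type*} [LieRing L] [LieAlgebra ℝ L]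

/-- `Q` is an inner product on the real Lie algebra `L`: a symmetric positive definite
bilinear form. -/
def IsInnerProduct (Q : L →ₗ[ℝ] L →ₗ[ℝ] ℝ) : Prop :=
  (∀ x y, Q x y = Q y x) ∧ ∀ x, x ≠ 0 → 0 < Q x x

/-- `g` is a `Q`-orthonormal basis of `L`. -/
def IsOrthonormalBasis {ι : Type*} [DecidableEq ι] (Q : L →ₗ[ℝ] L →ₗ[ℝ] ℝ)
    (g : Module.Basis ι ℝ L) : Prop :=
  ∀ i j, Q (g i) (g j) = if i = j then 1 else 0

/-- The matrix of `ad (g i)` with respect to the basis `g`. -/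
def adMatrix {ι : Type*} [Fintype ι] [DecidableEq ι] (g : Module.Basis ι ℝ L) (i : ι) :
    Matrix ι ι ℝ :=
  LinearMap.toMatrix g g (LieAlgebra.ad ℝ L (g i))

/-- The matrix, in a `Q`-orthonormal basis `g`, of the Ricci operator
`Ric = -(1/2) ∑ᵢ ad_{gᵢ}* ∘ ad_{gᵢ} + (1/4) ∑ᵢ ad_{gᵢ} ∘ ad_{gᵢ}* - (1/2) B - (ad_H)ˢ`
of the metric Lie algebra `(L, Q)`:  in an orthonormal basis the adjoint `A*` corresponds
to the transposed matrix, the Killing operator `B` has matrix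
`(j,k) ↦ trace(ad(gⱼ) ∘ ad(g_k))`, and `H = ∑ᵢ trace(ad gᵢ) • gᵢ`, so that the matrix of
`ad_H` is `∑ᵢ trace(ad gᵢ) • (matrix of ad gᵢ)` and `(ad_H)ˢ = (1/2)(ad_H + ad_H*)`. -/
def ricciMatrix {ι : Type*} [Fintype ι] [DecidableEq ι] (g : Module.Basis ι ℝ L) : Matrix ι ι ℝ :=
  (-(1/2 : ℝ)) • ∑ i, (adMatrix g i)ᵀ * adMatrix g i
    + (1/4 : ℝ) • ∑ i, adMatrix g i * (adMatrix g i)ᵀ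
    - (1/2 : ℝ) • Matrix.of (fun j k => (adMatrix g j * adMatrix g k).trace)
    - (1/2 : ℝ) • ((∑ i, (adMatrix g i).trace • adMatrix g i)
        + (∑ i, (adMatrix g i).trace • adMatrix g i)ᵀ)

/-- `μ` lists the eigenvalues (with multiplicity, in nondecreasing order) of the
4×4 matrix `A`: `μ` is monotone and the characteristic polynomial of `A` is
`∏ᵢ (X - μ i)`. -/
def SortedEigenvalues (A : Matrix (Fin 4) (Fin 4) ℝ) (μ : Fin 4 → ℝ) : Prop :=
  Monotone μ ∧ A.charpoly = ∏ i, (X - C (μ i))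

end

set_option maxHeartbeats 1000000 in
theorem key
    (L : Type*) [LieRing L] [LieAlgebra ℝ L] (e : Module.Basis (Fin 4) ℝ L)
    (h12 : ⁅e 0, e 1⁆ = e 2) (h31 : ⁅e 2, e 0⁆ = e 1) (h23 : ⁅e 1, e 2⁆ = e 0)
    (h14 : ⁅e 0, e 3⁆ = 0) (h24 : ⁅e 1, e 3⁆ = 0) (h34 : ⁅e 2, e 3⁆ = 0)
    (a : ℝ) (ha : a ≠ 0) :
    ∃ Q : L →ₗ[ℝ] L →ₗ[ℝ] ℝ, IsInnerProduct Q ∧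
      ∃ g : Module.Basis (Fin 4) ℝ L, IsOrthonormalBasis Q g ∧
        (ricciMatrix g).trace = 2 * a ^ 2 - a ^ 4 / 2 := by
  set w : Fin 4 → ℝˣ := ![Units.mk0 a ha, Units.mk0 a ha, 1, 1] with hw
  set g : Module.Basis (Fin 4) ℝ L := e.unitsSMul w with hgdef
  have hg0 : g 0 = a • e 0 := by simp [hgdef, Module.Basis.unitsSMul_apply, hw]
  have hg1 : g 1 = a • e 1 := by simp [hgdef, Module.Basis.unitsSMul_apply, hw]
  have hg2 : g 2 = e 2 := by simp [hgdef, Module.Basis.unitsSMul_apply, hw]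
  have hg3 : g 3 = e 3 := by simp [hgdef, Module.Basis.unitsSMul_apply, hw]
  have b01 : ⁅g 0, g 1⁆ = (a ^ 2) • g 2 := by
    rw [hg0, hg1, hg2, smul_lie, lie_smul, h12, smul_smul, sq]
  have b20 : ⁅g 2, g 0⁆ = g 1 := by rw [hg2, hg0, hg1, lie_smul, h31]
  have b12 : ⁅g 1, g 2⁆ = g 0 := by rw [hg1, hg2, hg0, smul_lie, h23]
  have b03 : ⁅g 0, g 3⁆ = 0 := by rw [hg0, hg3, smul_lie, h14, smul_zero]
  have b13 : ⁅g 1, g 3⁆ = 0 := by rw [hg1, hg3, smul_lie, h24, smul_zero]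
  have b23 : ⁅g 2, g 3⁆ = 0 := by rw [hg2, hg3, h34]
  have b10 : ⁅g 1, g 0⁆ = (-(a ^ 2)) • g 2 := by rw [← lie_skew, b01, neg_smul]
  have b02 : ⁅g 0, g 2⁆ = -g 1 := by rw [← lie_skew, b20]
  have b21 : ⁅g 2, g 1⁆ = -g 0 := by rw [← lie_skew, b12]
  have b30 : ⁅g 3, g 0⁆ = 0 := by rw [← lie_skew, b03, neg_zero]
  have b31 : ⁅g 3, g 1⁆ = 0 := by rw [← lie_skew, b13, neg_zero]
  have b32 : ⁅g 3, g 2⁆ = 0 := by rw [← lie_skew, b23, neg_zero]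
  -- the ad matrices
  have hA0 : adMatrix g 0 = !![0,0,0,0; 0,0,-1,0; 0,a^2,0,0; 0,0,0,0] := by
    ext j k
    fin_cases j <;> fin_cases k <;>
      simp [adMatrix, LinearMap.toMatrix_apply, LieAlgebra.ad_apply,
        b01, b02, b03, lie_self, Module.Basis.repr_self, Finsupp.single_apply,
        Matrix.vecHead, Matrix.vecTail]
  have hA1 : adMatrix g 1 = !![0,0,1,0; 0,0,0,0; -(a^2),0,0,0; 0,0,0,0] := by
    ext j k
    fin_cases j <;> fin_cases k <;>
      simp [adMatrix, LinearMap.toMatrix_apply, LieAlgebra.ad_apply,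
        b10, b12, b13, lie_self, Module.Basis.repr_self, Finsupp.single_apply,
        Matrix.vecHead, Matrix.vecTail]
  have hA2 : adMatrix g 2 = !![0,-1,0,0; 1,0,0,0; 0,0,0,0; 0,0,0,0] := by
    ext j k
    fin_cases j <;> fin_cases k <;>
      simp [adMatrix, LinearMap.toMatrix_apply, LieAlgebra.ad_apply,
        b20, b21, b23, lie_self, Module.Basis.repr_self, Finsupp.single_apply,
        Matrix.vecHead, Matrix.vecTail]
  have hA3 : adMatrix g 3 = 0 := by
    ext j k
    fin_cases j <;> fin_cases k <;>
      simp [adMatrix, LinearMap.toMatrix_apply, LieAlgebra.ad_apply,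
        b30, b31, b32, lie_self]
  have hc : ∀ k l : Fin 4, (g.coord k) (g l) = if l = k then 1 else 0 := by
    intro k l; simp [Module.Basis.coord_apply, Module.Basis.repr_self, Finsupp.single_apply]
  -- the inner product
  refine ⟨∑ i, (g.coord i).smulRight (g.coord i), ⟨?_, ?_⟩, g, ?_, ?_⟩
  · intro x y
    simp [LinearMap.sum_apply, LinearMap.smulRight_apply, smul_eq_mul, mul_comm]
  · intro x hx
    have hne : g.repr x ≠ 0 := by simpa using (g.repr.map_ne_zero_iff (x := x)).2 hx
    obtain ⟨i, hi⟩ := Finsupp.ne_iff.1 hne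
    simp only [LinearMap.sum_apply, LinearMap.smulRight_apply, Module.Basis.coord_apply,
      smul_eq_mul]
    refine Finset.sum_pos' (fun j _ => mul_self_nonneg _) ⟨i, Finset.mem_univ i, ?_⟩
    exact mul_self_pos.2 (by simpa using hi)
  · intro i j
    have expand : (∑ k : Fin 4, (g.coord k).smulRight (g.coord k)) (g i) (g j)
        = ∑ k : Fin 4, (g.coord k) (g i) * (g.coord k) (g j) := by
      simp only [LinearMap.sum_apply, LinearMap.smulRight_apply, LinearMap.smul_apply, smul_eq_mul]
    rw [expand]
    simp [hc, ite_mul, one_mul, zero_mul, Finset.sum_ite_eq, eq_comm]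
  · -- trace computation
    have hofs : (Matrix.of fun j k => (adMatrix g j * adMatrix g k).trace).trace
        = ∑ j : Fin 4, (adMatrix g j * adMatrix g j).trace := by
      simp [Matrix.trace, Matrix.diag]
    have ht0 : (adMatrix g 0).trace = 0 := by
      simp [hA0, Matrix.trace, Matrix.diag, Fin.sum_univ_four, Matrix.vecHead, Matrix.vecTail]
    have ht1 : (adMatrix g 1).trace = 0 := by
      simp [hA1, Matrix.trace, Matrix.diag, Fin.sum_univ_four, Matrix.vecHead, Matrix.vecTail]
    have ht2 : (adMatrix g 2).trace = 0 := by
      simp [hA2, Matrix.trace, Matrix.diag, Fin.sum_univ_four, Matrix.vecHead, Matrix.vecTail]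
    have ht3 : (adMatrix g 3).trace = 0 := by simp [hA3]
    have hH : (∑ i : Fin 4, (adMatrix g i).trace • adMatrix g i) = 0 := by
      rw [Fin.sum_univ_four, ht0, ht1, ht2, ht3]; simp
    have k00 : ((adMatrix g 0)ᵀ * adMatrix g 0).trace = a^2 * a^2 + 1 := by
      simp [hA0, Matrix.trace, Matrix.diag, Matrix.mul_apply, Fin.sum_univ_four, Matrix.vecHead, Matrix.vecTail]
    have k11 : ((adMatrix g 1)ᵀ * adMatrix g 1).trace = a^2 * a^2 + 1 := by
      simp [hA1, Matrix.trace, Matrix.diag, Matrix.mul_apply, Fin.sum_univ_four, Matrix.vecHead, Matrix.vecTail]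
    have k22 : ((adMatrix g 2)ᵀ * adMatrix g 2).trace = 2 := by
      simp [hA2, Matrix.trace, Matrix.diag, Matrix.mul_apply, Fin.sum_univ_four, Matrix.vecHead, Matrix.vecTail]; norm_num
    have k33 : ((adMatrix g 3)ᵀ * adMatrix g 3).trace = 0 := by simp [hA3]
    have m00 : (adMatrix g 0 * (adMatrix g 0)ᵀ).trace = a^2 * a^2 + 1 := by
      simp [hA0, Matrix.trace, Matrix.diag, Matrix.mul_apply, Fin.sum_univ_four, Matrix.vecHead, Matrix.vecTail]
      ring
    have m11 : (adMatrix g 1 * (adMatrix g 1)ᵀ).trace = a^2 * a^2 + 1 := by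
      simp [hA1, Matrix.trace, Matrix.diag, Matrix.mul_apply, Fin.sum_univ_four, Matrix.vecHead, Matrix.vecTail]
      ring
    have m22 : (adMatrix g 2 * (adMatrix g 2)ᵀ).trace = 2 := by
      simp [hA2, Matrix.trace, Matrix.diag, Matrix.mul_apply, Fin.sum_univ_four, Matrix.vecHead, Matrix.vecTail]; norm_num
    have m33 : (adMatrix g 3 * (adMatrix g 3)ᵀ).trace = 0 := by simp [hA3]
    have n00 : (adMatrix g 0 * adMatrix g 0).trace = -(2 * a^2) := by
      simp [hA0, Matrix.trace, Matrix.diag, Matrix.mul_apply, Fin.sum_univ_four, Matrix.vecHead, Matrix.vecTail]; ring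
    have n11 : (adMatrix g 1 * adMatrix g 1).trace = -(2 * a^2) := by
      simp [hA1, Matrix.trace, Matrix.diag, Matrix.mul_apply, Fin.sum_univ_four, Matrix.vecHead, Matrix.vecTail]; ring
    have n22 : (adMatrix g 2 * adMatrix g 2).trace = -2 := by
      simp [hA2, Matrix.trace, Matrix.diag, Matrix.mul_apply, Fin.sum_univ_four, Matrix.vecHead, Matrix.vecTail]; norm_num
    have n33 : (adMatrix g 3 * adMatrix g 3).trace = 0 := by simp [hA3]
    rw [ricciMatrix, Matrix.trace_sub, Matrix.trace_sub, Matrix.trace_add,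
      Matrix.trace_smul, Matrix.trace_smul, Matrix.trace_smul, Matrix.trace_smul,
      Matrix.trace_sum, Matrix.trace_sum, hofs, hH,
      Fin.sum_univ_four, Fin.sum_univ_four, Fin.sum_univ_four,
      k00, k11, k22, k33, m00, m11, m22, m33, n00, n11, n22, n33]
    simp only [smul_eq_mul, Matrix.transpose_zero, Matrix.trace_zero, add_zero,
      Matrix.trace_add]
    ring



/-- On the Lie algebra `su(2) ⊕ ℝ = A_{3,9} ⊕ A_1` (nonzero brackets
`[e₁,e₂] = e₃`, `[e₃,e₁] = e₂`, `[e₂,e₃] = e₁`) there exist inner products whose scalar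
curvature `S = trace Ric` is positive, zero, and negative, respectively. -/
theorem scalar_curvature_all_signs_su2_plus_R
    (L : Type*) [LieRing L] [LieAlgebra ℝ L] (e : Module.Basis (Fin 4) ℝ L)
    (h12 : ⁅e 0, e 1⁆ = e 2) (h31 : ⁅e 2, e 0⁆ = e 1) (h23 : ⁅e 1, e 2⁆ = e 0)
    (h14 : ⁅e 0, e 3⁆ = 0) (h24 : ⁅e 1, e 3⁆ = 0) (h34 : ⁅e 2, e 3⁆ = 0) :
    (∃ Q : L →ₗ[ℝ] L →ₗ[ℝ] ℝ, IsInnerProduct Q ∧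
      ∃ g : Module.Basis (Fin 4) ℝ L, IsOrthonormalBasis Q g ∧ 0 < (ricciMatrix g).trace) ∧
    (∃ Q : L →ₗ[ℝ] L →ₗ[ℝ] ℝ, IsInnerProduct Q ∧
      ∃ g : Module.Basis (Fin 4) ℝ L, IsOrthonormalBasis Q g ∧ (ricciMatrix g).trace = 0) ∧
    (∃ Q : L →ₗ[ℝ] L →ₗ[ℝ] ℝ, IsInnerProduct Q ∧
      ∃ g : Module.Basis (Fin 4) ℝ L, IsOrthonormalBasis Q g ∧ (ricciMatrix g).trace < 0) := by
  refine ⟨?_, ?_, ?_⟩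
  · obtain ⟨Q, hQ, g, hg, htr⟩ := key L e h12 h31 h23 h14 h24 h34 1 one_ne_zero
    exact ⟨Q, hQ, g, hg, by rw [htr]; norm_num⟩
  · obtain ⟨Q, hQ, g, hg, htr⟩ := key L e h12 h31 h23 h14 h24 h34 2 two_ne_zero
    exact ⟨Q, hQ, g, hg, by rw [htr]; norm_num⟩
  · obtain ⟨Q, hQ, g, hg, htr⟩ := key L e h12 h31 h23 h14 h24 h34 4 four_ne_zero
    exact ⟨Q, hQ, g, hg, by rw [htr]; norm_num⟩
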